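/- Let K : ℝⁿ × ℝʳ → ℝʳ be strictly differentiable at (D₀, x₀) with K(D₀, x₀) = 0 and with invertible partial Jacobian A := J_x K(D₀, x₀) : ℝʳ → ℝʳ, and let B := J_D K(D₀, x₀) : ℝⁿ → ℝʳ. Let φ be the implicit solution function with φ(D₀) = x₀ and K(D, φ(D)) = 0 near D₀, and fix c ∈ ℝʳ. Define E(D) = ⟪c, φ(D)⟫. Then E is differentiable at D₀ and its gradient is ∇E(D₀) = −Bᵀ (A⁻¹)ᵀ c, i.e., for every h ∈ ℝⁿ, ⟪∇E(D₀), h⟫ = −⟪c, A⁻¹ (B h)⟫. -/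

import Mathlib

/-!
Differentiating `K (D, φ D) = 0` gives `B + A ∘ φ'(D₀) = 0`, so the implicit function theorem
yields `φ'(D₀) = -A⁻¹ B`. The gradient of `D ↦ ⟪c, φ D⟫` is the adjoint of this derivative
applied to `c`, namely `-Bᵀ (A⁻¹)ᵀ c`.
-/

open Filter Topology RealInnerProductSpace ContinuousLinearMap

theorem HasFDerivAt.hasGradientAt_inner_left
    {E F : Type*} [NormedAddCommGroup E] [InnerProductSpace ℝ E] [CompleteSpace E]
    [NormedAddCommGroup F] [InnerProductSpace ℝ F] [CompleteSpace F]
    {φ : E → F} {φ' : E →L[ℝ] F} {x : E} (hφ : HasFDerivAt φ φ' x) (c : F) :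
    HasGradientAt (fun y => ⟪c, φ y⟫) (adjoint φ' c) x := by
  have hdual : InnerProductSpace.toDual ℝ E (adjoint φ' c) = innerSL ℝ c ∘L φ' := by
    ext h
    simp [adjoint_inner_left]
  rw [hasGradientAt_iff_hasFDerivAt, hdual]
  exact (innerSL ℝ c).hasFDerivAt.comp x hφ

/-- Locational marginal emissions by implicit differentiation of the KKT system: with `φ` the
implicit solution function of `K` at `(D₀, x₀)` and `E (D) = ⟪c, φ D⟫`, the function `E` is
differentiable at `D₀` with gradient `∇E (D₀) = -Bᵀ (A⁻¹)ᵀ c`, i.e.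
`⟪∇E (D₀), h⟫ = -⟪c, A⁻¹ (B h)⟫` for every `h`. -/
theorem lme_gradient_implicit_differentiation
    (n r : ℕ)
    (K : EuclideanSpace ℝ (Fin n) × EuclideanSpace ℝ (Fin r) → EuclideanSpace ℝ (Fin r))
    (D₀ : EuclideanSpace ℝ (Fin n)) (x₀ : EuclideanSpace ℝ (Fin r))
    (K' : (EuclideanSpace ℝ (Fin n) × EuclideanSpace ℝ (Fin r)) →L[ℝ]
      EuclideanSpace ℝ (Fin r))
    (hK : HasStrictFDerivAt K K' (D₀, x₀))
    (hK0 : K (D₀, x₀) = 0)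
    (A : EuclideanSpace ℝ (Fin r) ≃L[ℝ] EuclideanSpace ℝ (Fin r))
    (hA : (A : EuclideanSpace ℝ (Fin r) →L[ℝ] EuclideanSpace ℝ (Fin r)) =
      K'.comp (ContinuousLinearMap.inr ℝ (EuclideanSpace ℝ (Fin n))
        (EuclideanSpace ℝ (Fin r))))
    (B : EuclideanSpace ℝ (Fin n) →L[ℝ] EuclideanSpace ℝ (Fin r))
    (hB : B = K'.comp (ContinuousLinearMap.inl ℝ (EuclideanSpace ℝ (Fin n))
      (EuclideanSpace ℝ (Fin r))))
    (c : EuclideanSpace ℝ (Fin r)) :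
    ∃ φ : EuclideanSpace ℝ (Fin n) → EuclideanSpace ℝ (Fin r),
      φ D₀ = x₀ ∧
      (∀ᶠ p : EuclideanSpace ℝ (Fin n) × EuclideanSpace ℝ (Fin r) in 𝓝 (D₀, x₀),
        (K p = 0 ↔ p.2 = φ p.1)) ∧
      HasGradientAt (fun D => ⟪c, φ D⟫)
        (-(ContinuousLinearMap.adjoint B
          (ContinuousLinearMap.adjoint
            (A.symm : EuclideanSpace ℝ (Fin r) →L[ℝ] EuclideanSpace ℝ (Fin r)) c))) D₀ ∧
      ∀ h : EuclideanSpace ℝ (Fin n),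
        ⟪-(ContinuousLinearMap.adjoint B
            (ContinuousLinearMap.adjoint
              (A.symm : EuclideanSpace ℝ (Fin r) →L[ℝ] EuclideanSpace ℝ (Fin r)) c)), h⟫ =
          -⟪c, A.symm (B h)⟫ := by
  have hinv : (K' ∘L inr ℝ _ _).IsInvertible := ⟨A, hA⟩
  set φ := hK.implicitFunctionOfProdDomain hinv
  have hsolve : ∀ᶠ p in 𝓝 (D₀, x₀), K p = 0 ↔ φ p.1 = p.2 := by
    simpa only [hK0] using hK.eventually_apply_eq_iff_implicitFunctionOfProdDomain hinv
  have hφ' : HasFDerivAt φ (-((A.symm : _ →L[ℝ] _) ∘L B)) D₀ := by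
    have := (hK.hasStrictFDerivAt_implicitFunctionOfProdDomain hinv).hasFDerivAt
    rwa [← hA, ← hB, inverse_equiv, ← neg_comp] at this
  refine ⟨φ, hsolve.self_of_nhds.mp hK0, ?_, ?_, fun h => ?_⟩
  · filter_upwards [hsolve] with p hp
    rw [hp, eq_comm]
  · simpa [adjoint_comp] using hφ'.hasGradientAt_inner_left c
  · rw [inner_neg_left, adjoint_inner_left, adjoint_inner_left]
    rfl
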